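/- arXiv:2503.13748 — 2 statements merged into one kernel-verified Lean document; each statement's English description precedes it below -/
import Mathlib

section
/- Let K ≥ 1, and for each k let r_k > 0, w_k ∈ ℂ with r_k² + |w_k|² = 1, and form the (K+1)×(K+1) special unitary matrices R_k(r_k, w_k) which equal the identity except in rows/columns 1 and k+1, where the 2×2 block (in positions (1,1),(1,k+1),(k+1,1),(k+1,k+1)) is ((r_k, w_k),(−w̄_k, r_k)). If ∏_{k=1}^{K} R_k(r_k, w_k) = ∏_{k=1}^{K} R_k(r'_k, w'_k) with all r_k, r'_k > 0, then r_k = r'_k and w_k = w'_k for all k. -/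
open Complex

noncomputable section

/-- The block-embedded `SU(2)` rotation `R_k(r, w)` acting on coordinates `0`
and `k+1` of `ℂ^{K+1}`: it is the identity except that its entries at
positions `(0,0), (0,k+1), (k+1,0), (k+1,k+1)` are `r, w, −w̄, r`. -/
def Rblk (K : ℕ) (k : Fin K) (r : ℝ) (w : ℂ) : Matrix (Fin (K + 1)) (Fin (K + 1)) ℂ :=
  fun i j =>
    if i = 0 then (if j = 0 then (r : ℂ) else if j = k.succ then w else 0)
    else if i = k.succ then
      (if j = 0 then -(starRingEnd ℂ) w else if j = k.succ then (r : ℂ) else 0)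
    else (if i = j then 1 else 0)

end

/-- Multiplying a matrix on the right by `Rblk K m rr ww` only changes columns
`0` and `m.succ` of row `0`. -/
lemma mul_Rblk {K : ℕ} (A : Matrix (Fin (K+1)) (Fin (K+1)) ℂ)
    (m : Fin K) (rr : ℝ) (ww : ℂ) (j : Fin (K+1)) :
    (A * Rblk K m rr ww) 0 j =
      if j = 0 then A 0 0 * rr - A 0 m.succ * (starRingEnd ℂ) ww
      else if j = m.succ then A 0 0 * ww + A 0 m.succ * rr
      else A 0 j := by
  rw [Matrix.mul_apply]
  have hms : (m.succ : Fin (K+1)) ≠ 0 := Fin.succ_ne_zero m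
  by_cases hj : j = 0
  · subst hj
    have hB : ∀ t : Fin (K+1), A 0 t * Rblk K m rr ww t 0
        = (if t = 0 then A 0 0 * rr else 0)
          + (if t = m.succ then A 0 m.succ * (-(starRingEnd ℂ) ww) else 0) := by
      intro t
      simp only [Rblk]
      split_ifs <;> simp_all
    rw [Finset.sum_congr rfl (fun t _ => hB t), Finset.sum_add_distrib,
      Finset.sum_ite_eq', Finset.sum_ite_eq']
    simp; ring
  · rw [if_neg hj]
    by_cases hjm : j = m.succ
    · subst hjm
      rw [if_pos rfl]
      have hB : ∀ t : Fin (K+1), A 0 t * Rblk K m rr ww t m.succ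
          = (if t = 0 then A 0 0 * ww else 0)
            + (if t = m.succ then A 0 m.succ * (rr : ℂ) else 0) := by
        intro t
        simp only [Rblk]
        split_ifs <;> simp_all
      rw [Finset.sum_congr rfl (fun t _ => hB t), Finset.sum_add_distrib,
        Finset.sum_ite_eq', Finset.sum_ite_eq']
      simp
    · rw [if_neg hjm]
      have hB : ∀ t : Fin (K+1), A 0 t * Rblk K m rr ww t j
          = if t = j then A 0 j else 0 := by
        intro t
        simp only [Rblk]
        split_ifs <;> simp_all
      rw [Finset.sum_congr rfl (fun t _ => hB t), Finset.sum_ite_eq']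
      simp

/-- `r` extended to all of `ℕ` by `1`. -/
noncomputable def padr {K : ℕ} (r : Fin K → ℝ) (k : ℕ) : ℝ :=
  if h : k < K then r ⟨k, h⟩ else 1

/-- Row `0` of the prefix product `∏_{k<m} R_k(r_k, w_k)`. -/
lemma row_prod {K : ℕ} (r : Fin K → ℝ) (w : Fin K → ℂ) (m : ℕ) (hm : m ≤ K) :
    (((List.ofFn fun k => Rblk K k (r k) (w k)).take m).prod 0 0
      = ((∏ k ∈ Finset.range m, padr r k : ℝ) : ℂ)) ∧
    ∀ l : Fin K, ((List.ofFn fun k => Rblk K k (r k) (w k)).take m).prod 0 l.succ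
      = if l.val < m then ((∏ k ∈ Finset.range l.val, padr r k : ℝ) : ℂ) * w l else 0 := by
  induction m with
  | zero =>
      constructor
      · simp [Matrix.one_apply]
      · intro l
        simp [Matrix.one_apply, (Fin.succ_ne_zero l).symm]
  | succ m ih =>
      have hmK : m < K := hm
      obtain ⟨ih0, ihs⟩ := ih (le_of_lt hmK)
      have hlen : m < (List.ofFn fun k => Rblk K k (r k) (w k)).length := by
        simpa using hmK
      have hstep : ((List.ofFn fun k => Rblk K k (r k) (w k)).take (m+1)).prod
          = ((List.ofFn fun k => Rblk K k (r k) (w k)).take m).prod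
            * Rblk K ⟨m, hmK⟩ (r ⟨m, hmK⟩) (w ⟨m, hmK⟩) := by
        rw [List.prod_take_succ _ _ hlen]
        congr 1
        simp
      have hmsucc : ((⟨m, hmK⟩ : Fin K).succ : Fin (K+1)) ≠ 0 := Fin.succ_ne_zero _
      constructor
      · rw [hstep, mul_Rblk, if_pos rfl, ih0, ihs ⟨m, hmK⟩]
        simp only [lt_irrefl, if_neg (lt_irrefl m)]
        rw [Finset.prod_range_succ]
        have : padr r m = r ⟨m, hmK⟩ := dif_pos hmK
        rw [this]
        push_cast
        ring
      · intro l
        rw [hstep, mul_Rblk, if_neg (Fin.succ_ne_zero l)]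
        by_cases hl : l = ⟨m, hmK⟩
        · subst hl
          rw [if_pos rfl, ih0, ihs]
          have : (⟨m, hmK⟩ : Fin K).val < m + 1 := Nat.lt_succ_self m
          rw [if_pos this]
          simp [lt_irrefl]
        · have hne : (l.succ : Fin (K+1)) ≠ (⟨m, hmK⟩ : Fin K).succ :=
            fun hEq => hl (Fin.succ_injective _ hEq)
          rw [if_neg hne, ihs l]
          have hlv : l.val ≠ m := fun hEq => hl (Fin.ext hEq)
          split_ifs with h1 h2 h2 <;> first | rfl | omega

/-- If the ordered products `∏_{k} R_k(r_k, w_k)` and `∏_{k} R_k(r'_k, w'_k)`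
agree, with all `r_k, r'_k > 0` and `r_k² + |w_k|² = 1 = r'_k² + |w'_k|²`,
then `r_k = r'_k` and `w_k = w'_k` for all `k`. -/
theorem Rblk_product_injective (K : ℕ) (hK : 1 ≤ K) (r r' : Fin K → ℝ)
    (w w' : Fin K → ℂ)
    (hr : ∀ k, 0 < r k) (hr' : ∀ k, 0 < r' k)
    (hn : ∀ k, r k ^ 2 + ‖w k‖ ^ 2 = 1) (hn' : ∀ k, r' k ^ 2 + ‖w' k‖ ^ 2 = 1)
    (h : (List.ofFn fun k => Rblk K k (r k) (w k)).prod
        = (List.ofFn fun k => Rblk K k (r' k) (w' k)).prod) :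
    ∀ k, r k = r' k ∧ w k = w' k := by
  have htake : ∀ (s : Fin K → ℝ) (v : Fin K → ℂ),
      ((List.ofFn fun k => Rblk K k (s k) (v k)).take K)
        = List.ofFn fun k => Rblk K k (s k) (v k) := by
    intro s v
    exact List.take_of_length_le (by simp)
  have key : ∀ l : Fin K,
      ((∏ k ∈ Finset.range l.val, padr r k : ℝ) : ℂ) * w l
        = ((∏ k ∈ Finset.range l.val, padr r' k : ℝ) : ℂ) * w' l := by
    intro l
    have h1 := (row_prod r w K le_rfl).2 l
    have h2 := (row_prod r' w' K le_rfl).2 l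
    rw [htake] at h1 h2
    rw [if_pos l.isLt] at h1 h2
    rw [← h1, ← h2, h]
  have hpos : ∀ n, (0:ℝ) < ∏ k ∈ Finset.range n, padr r k := by
    intro n
    refine Finset.prod_pos fun k _ => ?_
    unfold padr; split
    · exact hr _
    · exact one_pos
  have main : ∀ n, ∀ l : Fin K, l.val < n → r l = r' l ∧ w l = w' l := by
    intro n
    induction n with
    | zero => exact fun l hl => absurd hl (Nat.not_lt_zero _)
    | succ n ihn =>
        intro l hl
        rcases Nat.lt_or_ge l.val n with h' | h'
        · exact ihn l h'
        · have hln : l.val = n := by omega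
          have hc : (∏ k ∈ Finset.range l.val, padr r k)
              = ∏ k ∈ Finset.range l.val, padr r' k := by
            refine Finset.prod_congr rfl fun k hk => ?_
            have hkn : k < l.val := Finset.mem_range.mp hk
            unfold padr
            split
            · next hkK => exact (ihn ⟨k, hkK⟩ (show k < n by omega)).1
            · rfl
          have hw : w l = w' l := by
            have := key l
            rw [hc] at this
            have hcne : ((∏ k ∈ Finset.range l.val, padr r' k : ℝ) : ℂ) ≠ 0 := by
              exact_mod_cast ne_of_gt (by rw [← hc]; exact hpos _)
            exact mul_left_cancel₀ hcne this
          have hrr : r l = r' l := by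
            have e1 := hn l
            have e2 := hn' l
            rw [hw] at e1
            nlinarith [hr l, hr' l]
          exact ⟨hrr, hw⟩
  intro k
  exact main (k.val + 1) k (Nat.lt_succ_self _)
end

section
/- With the block-embedded SU(2) matrices R_k(r_k, w_k) as above (acting on coordinates 1 and k+1 of ℂ^{K+1}), the first column of the ordered product ∏_{k=1}^{K} R_k(r_k, w_k) equals (r_1 r_2 ⋯ r_K, −r_2⋯r_K w̄_1, −r_3⋯r_K w̄_2, …, −r_K w̄_{K−1}, −w̄_K)ᵀ. -/
open Complex

/-!
Multiply out the product from the right. Since the indices increase, when `R_k` is applied to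
the first column `v` of `R_{k+1} ⋯ R_K`, the coordinate `v_{k+1}` is still `0`; so `R_k` only
multiplies `v_0` by `r_k`, writes `-w̄_k v_0` into coordinate `k+1`, and leaves the rest alone.
-/

section RblkMul

variable {K : ℕ} {α : Type*} {k : Fin K} {r : ℝ} {w : ℂ} {A : Matrix (Fin (K + 1)) α ℂ} {j : α}

theorem Rblk_mul_apply_zero :
    (Rblk K k r w * A) 0 j = r * A 0 j + w * A k.succ j := by
  rw [Matrix.mul_apply, Fintype.sum_eq_add 0 k.succ (Fin.succ_ne_zero k).symm]
  · simp [Rblk]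
  · rintro m ⟨hm0, hmk⟩
    simp [Rblk, hm0, hmk]

theorem Rblk_mul_apply_succ_self :
    (Rblk K k r w * A) k.succ j = -(starRingEnd ℂ) w * A 0 j + r * A k.succ j := by
  rw [Matrix.mul_apply, Fintype.sum_eq_add 0 k.succ (Fin.succ_ne_zero k).symm]
  · simp [Rblk, Fin.succ_ne_zero k]
  · rintro m ⟨hm0, hmk⟩
    simp [Rblk, Fin.succ_ne_zero k, hm0, hmk]

theorem Rblk_mul_apply_succ_of_ne {l : Fin K} (hl : l ≠ k) :
    (Rblk K k r w * A) l.succ j = A l.succ j := by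
  have hlk : l.succ ≠ k.succ := Fin.succ_injective K |>.ne hl
  simp [Matrix.mul_apply, Rblk, Fin.succ_ne_zero l, hlk]

end RblkMul

theorem Rblk_list_prod_first_column {K : ℕ} (r : Fin K → ℝ) (w : Fin K → ℂ)
    (ks : List (Fin K)) (hks : ks.Pairwise (· < ·)) :
    (ks.map fun k => Rblk K k (r k) (w k)).prod 0 0 = ∏ k ∈ ks.toFinset, (r k : ℂ) ∧
    ∀ k : Fin K, (ks.map fun k => Rblk K k (r k) (w k)).prod k.succ 0 =
      if k ∈ ks then
        -(∏ l ∈ ks.toFinset.filter (k < ·), (r l : ℂ)) * (starRingEnd ℂ) (w k)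
      else 0 := by
  induction ks with
  | nil => simp [Fin.succ_ne_zero]
  | cons k₀ ks ih =>
    obtain ⟨hk₀_lt, hks⟩ := List.pairwise_cons.mp hks
    obtain ⟨ih_zero, ih_succ⟩ := ih hks
    have hk₀_notMem : k₀ ∉ ks := fun h => lt_irrefl k₀ (hk₀_lt k₀ h)
    have hk₀_col : (ks.map fun k => Rblk K k (r k) (w k)).prod k₀.succ 0 = 0 := by
      rw [ih_succ, if_neg hk₀_notMem]
    simp only [List.map_cons, List.prod_cons, List.toFinset_cons, List.mem_cons]
    refine ⟨?_, fun k => ?_⟩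
    · rw [Rblk_mul_apply_zero, hk₀_col, ih_zero,
        Finset.prod_insert (List.mem_toFinset.not.mpr hk₀_notMem)]
      ring
    · rcases eq_or_ne k k₀ with rfl | hk
      · have hfilter : (insert k ks.toFinset).filter (k < ·) = ks.toFinset := by
          ext l
          simp only [Finset.mem_filter, Finset.mem_insert, List.mem_toFinset]
          constructor
          · rintro ⟨rfl | hl, hkl⟩
            exacts [absurd hkl (lt_irrefl _), hl]
          · exact fun hl => ⟨Or.inr hl, hk₀_lt l hl⟩
        rw [Rblk_mul_apply_succ_self, hk₀_col, ih_zero, if_pos (Or.inl rfl), hfilter]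
        ring
      · rw [Rblk_mul_apply_succ_of_ne hk, ih_succ]
        by_cases hmem : k ∈ ks
        · have hk₀k : ¬ k < k₀ := (hk₀_lt k hmem).asymm
          rw [if_pos hmem, if_pos (Or.inr hmem), Finset.filter_insert, if_neg hk₀k]
        · rw [if_neg hmem, if_neg (by tauto)]

theorem Rblk_product_first_column_general (K : ℕ) (r : Fin K → ℝ) (w : Fin K → ℂ) :
    ((List.ofFn fun k => Rblk K k (r k) (w k)).prod 0 0
        = ∏ k : Fin K, (r k : ℂ)) ∧
    ∀ k : Fin K,
      (List.ofFn fun k => Rblk K k (r k) (w k)).prod k.succ 0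
        = -(∏ l ∈ Finset.univ.filter fun l => k < l, (r l : ℂ)) *
            (starRingEnd ℂ) (w k) := by
  obtain ⟨h_zero, h_succ⟩ :=
    Rblk_list_prod_first_column r w (List.finRange K) (List.pairwise_lt_finRange K)
  rw [List.toFinset_finRange] at h_zero h_succ
  rw [List.ofFn_eq_map]
  exact ⟨h_zero, fun k => by rw [h_succ, if_pos (List.mem_finRange k)]⟩

/-- The first column of the ordered product `∏_{k=1}^{K} R_k(r_k, w_k)` is
`(r_1⋯r_K, −r_2⋯r_K w̄_1, …, −r_K w̄_{K−1}, −w̄_K)ᵀ`. -/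
theorem Rblk_product_first_column (K : ℕ) (r : Fin K → ℝ) (w : Fin K → ℂ)
    (hn : ∀ k, r k ^ 2 + ‖w k‖ ^ 2 = 1) :
    ((List.ofFn fun k => Rblk K k (r k) (w k)).prod 0 0
        = ∏ k : Fin K, (r k : ℂ)) ∧
    ∀ k : Fin K,
      (List.ofFn fun k => Rblk K k (r k) (w k)).prod k.succ 0
        = -(∏ l ∈ Finset.univ.filter fun l => k < l, (r l : ℂ)) *
            (starRingEnd ℂ) (w k) :=
  Rblk_product_first_column_general K r w
end
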